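/- arXiv:1512.06589 — 4 statements merged into one kernel-verified Lean document; each statement's English description precedes it below -/
import Mathlib

section
/- For all 0 < a < b and α ∈ [0,1), the function m_α : ℝ → ℂ given by m_α(τ) = |τ|^α (cos(απ/2) + i·sgn(τ)·sin(απ/2)) satisfies 1 + a·m_α(τ) ≠ 0 for every τ ∈ ℝ, so that l_α(τ) = (1 + b·m_α(τ))/(1 + a·m_α(τ)) is well defined, and moreover there exists a constant C > 0 such that |l_α(τ)| ≤ C for all τ ∈ ℝ. -/
open Real Complex MeasureTheory

/-- The multiplier `m_α(τ) = |τ|^α (cos(απ/2) + i·sgn(τ)·sin(απ/2))`. -/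
noncomputable def mAlpha (α τ : ℝ) : ℂ :=
  ((|τ| ^ α : ℝ) : ℂ) *
    (((Real.cos (α * Real.pi / 2) : ℝ) : ℂ) +
      Complex.I * ((Real.sign τ : ℝ) : ℂ) * ((Real.sin (α * Real.pi / 2) : ℝ) : ℂ))

/-- The Zener multiplier `l_α(τ) = (1 + b·m_α(τ))/(1 + a·m_α(τ))`. -/
noncomputable def lAlpha (a b α τ : ℝ) : ℂ :=
  (1 + (b : ℂ) * mAlpha α τ) / (1 + (a : ℂ) * mAlpha α τ)

theorem stmt0 (a b α : ℝ) (ha : 0 < a) (hab : a < b) (hα0 : 0 ≤ α) (hα1 : α < 1) :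
    (∀ τ : ℝ, 1 + (a : ℂ) * mAlpha α τ ≠ 0) ∧
    ∃ C : ℝ, 0 < C ∧ ∀ τ : ℝ, ‖lAlpha a b α τ‖ ≤ C := by
  set θ := α * Real.pi / 2 with hθ
  have hpi := Real.pi_pos
  have hθ0 : 0 ≤ θ := by positivity
  have hθlt : θ < Real.pi / 2 := by
    rw [hθ]; nlinarith
  have hc : 0 < Real.cos θ :=
    Real.cos_pos_of_mem_Ioo ⟨by linarith, hθlt⟩
  have hr : ∀ τ : ℝ, 0 ≤ |τ| ^ α := fun τ => Real.rpow_nonneg (abs_nonneg τ) α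
  have hre : ∀ τ : ℝ, (1 + (a : ℂ) * mAlpha α τ).re = 1 + a * (|τ| ^ α * Real.cos θ) := by
    intro τ
    simp only [mAlpha, hθ, Complex.add_re, Complex.mul_re, Complex.mul_im,
      Complex.one_re, Complex.one_im, Complex.ofReal_re, Complex.ofReal_im,
      Complex.I_re, Complex.I_im]
    ring
  have hrepos : ∀ τ : ℝ, 0 < (1 + (a : ℂ) * mAlpha α τ).re := by
    intro τ
    rw [hre τ]
    have h1 : 0 ≤ a * (|τ| ^ α * Real.cos θ) :=
      mul_nonneg ha.le (mul_nonneg (hr τ) hc.le)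
    linarith
  have hne : ∀ τ : ℝ, 1 + (a : ℂ) * mAlpha α τ ≠ 0 := by
    intro τ h
    have := hrepos τ
    rw [h] at this
    simp at this
  have hb : 0 < b := lt_trans ha hab
  have hCpos : 0 < 1 + b / (a * Real.cos θ) := by
    have : 0 < b / (a * Real.cos θ) := div_pos hb (by positivity)
    linarith
  refine ⟨hne, 1 + b / (a * Real.cos θ), hCpos, ?_⟩
  have hm : ∀ τ : ℝ, ‖mAlpha α τ‖ ≤ |τ| ^ α := by
    intro τ
    rw [mAlpha, norm_mul, Complex.norm_real, Real.norm_eq_abs, _root_.abs_of_nonneg (hr τ)]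
    have hw : ‖((Real.cos θ : ℝ) : ℂ) +
        Complex.I * ((Real.sign τ : ℝ) : ℂ) * ((Real.sin θ : ℝ) : ℂ)‖ ≤ 1 := by
      have hs : Real.sign τ ^ 2 ≤ 1 := by
        rcases lt_trichotomy τ 0 with h | h | h
        · rw [Real.sign_of_neg h]; norm_num
        · simp [h, Real.sign_zero]
        · rw [Real.sign_of_pos h]; norm_num
      have hsq : ‖((Real.cos θ : ℝ) : ℂ) +
          Complex.I * ((Real.sign τ : ℝ) : ℂ) * ((Real.sin θ : ℝ) : ℂ)‖ ^ 2 ≤ 1 := by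
        rw [← Complex.normSq_eq_norm_sq]
        have hpy := Real.sin_sq_add_cos_sq θ
        simp only [Complex.normSq_apply, Complex.add_re, Complex.add_im, Complex.mul_re,
          Complex.mul_im, Complex.I_re, Complex.I_im, Complex.ofReal_re, Complex.ofReal_im]
        nlinarith [sq_nonneg (Real.sin θ)]
      nlinarith [norm_nonneg (((Real.cos θ : ℝ) : ℂ) +
          Complex.I * ((Real.sign τ : ℝ) : ℂ) * ((Real.sin τ * Real.pi / 2 : ℝ) : ℂ))]
    calc |τ| ^ α * ‖((Real.cos θ : ℝ) : ℂ) +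
        Complex.I * ((Real.sign τ : ℝ) : ℂ) * ((Real.sin θ : ℝ) : ℂ)‖
        ≤ |τ| ^ α * 1 := by
          exact mul_le_mul_of_nonneg_left hw (hr τ)
      _ = |τ| ^ α := mul_one _
  intro τ
  set r := |τ| ^ α with hrdef
  have hr0 : 0 ≤ r := hr τ
  have hDpos : 0 < ‖1 + (a : ℂ) * mAlpha α τ‖ := by
    calc (0:ℝ) < (1 + (a : ℂ) * mAlpha α τ).re := hrepos τ
      _ ≤ ‖1 + (a : ℂ) * mAlpha α τ‖ := Complex.re_le_norm _
  rw [lAlpha, norm_div, div_le_iff₀ hDpos]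
  have hN : ‖1 + (b : ℂ) * mAlpha α τ‖ ≤ 1 + b * r := by
    calc ‖1 + (b : ℂ) * mAlpha α τ‖ ≤ ‖(1 : ℂ)‖ + ‖(b : ℂ) * mAlpha α τ‖ := norm_add_le _ _
      _ = 1 + |b| * ‖mAlpha α τ‖ := by simp
      _ ≤ 1 + b * r := by
          rw [abs_of_pos (lt_trans ha hab)]
          have := hm τ
          nlinarith [norm_nonneg (mAlpha α τ)]
  have hD : 1 + a * (r * Real.cos θ) ≤ ‖1 + (a : ℂ) * mAlpha α τ‖ := by
    calc 1 + a * (r * Real.cos θ) = (1 + (a : ℂ) * mAlpha α τ).re := (hre τ).symm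
      _ ≤ ‖1 + (a : ℂ) * mAlpha α τ‖ := Complex.re_le_norm _
  have hCkey : (1 + b / (a * Real.cos θ)) * (a * Real.cos θ) = a * Real.cos θ + b := by
    field_simp
  have hC1 : 1 ≤ 1 + b / (a * Real.cos θ) := by
    have : 0 < b / (a * Real.cos θ) := div_pos hb (by positivity)
    linarith
  have h2 : (1 + b / (a * Real.cos θ)) * (a * Real.cos θ) * r = (a * Real.cos θ + b) * r := by
    rw [hCkey]
  calc ‖1 + (b : ℂ) * mAlpha α τ‖ ≤ 1 + b * r := hN
    _ ≤ (1 + b / (a * Real.cos θ)) * (1 + a * (r * Real.cos θ)) := by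
        nlinarith [h2, hC1, mul_nonneg hr0 (mul_pos ha hc).le]
    _ ≤ (1 + b / (a * Real.cos θ)) * ‖1 + (a : ℂ) * mAlpha α τ‖ := by
        apply mul_le_mul_of_nonneg_left hD (by positivity)
end

section
/- For 0 < a < b and α ∈ (0,1), the function l_α is continuously differentiable on ℝ \ {0}, and there exists a constant C > 0 such that |l_α'(τ)| ≤ C/|τ| for all τ ≠ 0. -/
open Real Complex

namespace Stmt1Aux

/-- The unit complex factor. -/
noncomputable def cc (α s : ℝ) : ℂ :=
  ((Real.cos (α * Real.pi / 2) : ℝ) : ℂ) +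
      Complex.I * ((s : ℝ) : ℂ) * ((Real.sin (α * Real.pi / 2) : ℝ) : ℂ)

lemma mAlpha_eq (α τ : ℝ) : mAlpha α τ = ((|τ| ^ α : ℝ) : ℂ) * cc α (Real.sign τ) := rfl

lemma cc_re (α s : ℝ) : (cc α s).re = Real.cos (α * Real.pi / 2) := by
  simp only [cc, Complex.add_re, Complex.mul_re, Complex.mul_im, Complex.I_re, Complex.I_im,
    Complex.ofReal_re, Complex.ofReal_im]
  ring

lemma cc_im (α s : ℝ) : (cc α s).im = s * Real.sin (α * Real.pi / 2) := by
  simp only [cc, Complex.add_im, Complex.mul_re, Complex.mul_im, Complex.I_re, Complex.I_im,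
    Complex.ofReal_re, Complex.ofReal_im]
  ring

lemma abs_cc (α s : ℝ) (hs : s = 1 ∨ s = -1) : ‖cc α s‖ = 1 := by
  have : Complex.normSq (cc α s) = 1 := by
    rw [Complex.normSq_apply, cc_re, cc_im]
    rcases hs with h | h <;> subst h <;> nlinarith [Real.sin_sq_add_cos_sq (α * Real.pi / 2)]
  rw [← Complex.sq_norm] at this
  nlinarith [norm_nonneg (cc α s)]

lemma cos_pos (α : ℝ) (hα0 : 0 < α) (hα1 : α < 1) : 0 < Real.cos (α * Real.pi / 2) := by
  apply Real.cos_pos_of_mem_Ioo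
  constructor
  · nlinarith [Real.pi_pos]
  · nlinarith [Real.pi_pos]

lemma denom_re (a α τ : ℝ) :
    (1 + (a : ℂ) * mAlpha α τ).re = 1 + a * (|τ| ^ α * Real.cos (α * Real.pi / 2)) := by
  rw [mAlpha_eq]
  simp only [Complex.add_re, Complex.mul_re, Complex.one_re, Complex.one_im,
    Complex.ofReal_re, Complex.ofReal_im, cc_re, cc_im]
  ring

lemma denom_ne (a α τ : ℝ) (ha : 0 ≤ a) (hα0 : 0 < α) (hα1 : α < 1) :
    (1 + (a : ℂ) * mAlpha α τ) ≠ 0 := by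
  intro h
  have := denom_re a α τ
  rw [h] at this
  simp only [Complex.zero_re] at this
  have h1 : 0 ≤ a * (|τ| ^ α * Real.cos (α * Real.pi / 2)) :=
    mul_nonneg ha (mul_nonneg (Real.rpow_nonneg (abs_nonneg τ) α) (cos_pos α hα0 hα1).le)
  linarith

lemma normSq_denom_ge (a α τ : ℝ) (ha : 0 ≤ a) :
    a * Real.cos (α * Real.pi / 2) * |τ| ^ α ≤ Complex.normSq (1 + (a : ℂ) * mAlpha α τ) := by
  have h1 : Complex.normSq (1 + (a : ℂ) * mAlpha α τ) =
      (1 + (a : ℂ) * mAlpha α τ).re ^ 2 + (1 + (a : ℂ) * mAlpha α τ).im ^ 2 := by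
    rw [Complex.normSq_apply]; ring
  rw [h1, denom_re a α τ]
  set x := a * (|τ| ^ α * Real.cos (α * Real.pi / 2)) with hx
  nlinarith [sq_nonneg ((1 + (a : ℂ) * mAlpha α τ).im), sq_nonneg x, sq_nonneg (1 + x)]

/-- On the set where `sign τ = s` constantly, a nice formula. -/
lemma hasDerivAt_mAlpha (α τ : ℝ) (hτ : τ ≠ 0) :
    HasDerivAt (mAlpha α)
      (((Real.sign τ * (α * |τ| ^ (α - 1)) : ℝ) : ℂ) * cc α (Real.sign τ)) τ := by
  rcases lt_or_gt_of_ne hτ with h | h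
  · -- τ < 0
    have hs : Real.sign τ = -1 := Real.sign_of_neg h
    have key : HasDerivAt (fun t : ℝ => (((-t) ^ α : ℝ) : ℂ) * cc α (-1))
        (((-1 * (α * (-τ) ^ (α - 1)) : ℝ) : ℂ) * cc α (-1)) τ := by
      have h1 : HasDerivAt (fun t : ℝ => (-t) ^ α) (-1 * (α * (-τ) ^ (α - 1))) τ := by
        have h2 : HasDerivAt (fun x : ℝ => x ^ α) (α * (-τ) ^ (α - 1)) (-τ) :=
          Real.hasDerivAt_rpow_const (Or.inl (by linarith))
        have h3 : HasDerivAt (fun t : ℝ => -t) (-1) τ := (hasDerivAt_id τ).neg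
        exact (h2.comp τ h3).congr_deriv (by ring)
      exact (h1.ofReal_comp).mul_const _
    have heq : mAlpha α =ᶠ[nhds τ] fun t => (((-t) ^ α : ℝ) : ℂ) * cc α (-1) := by
      filter_upwards [IsOpen.mem_nhds isOpen_Iio (show τ ∈ Set.Iio (0:ℝ) from h)] with t ht
      rw [mAlpha_eq, Real.sign_of_neg ht, abs_of_neg ht]
    rw [hs, abs_of_neg h]
    exact key.congr_of_eventuallyEq heq
  · -- τ > 0
    have hs : Real.sign τ = 1 := Real.sign_of_pos h
    have key : HasDerivAt (fun t : ℝ => ((t ^ α : ℝ) : ℂ) * cc α 1)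
        (((α * τ ^ (α - 1) : ℝ) : ℂ) * cc α 1) τ := by
      have h1 : HasDerivAt (fun x : ℝ => x ^ α) (α * τ ^ (α - 1)) τ :=
        Real.hasDerivAt_rpow_const (Or.inl hτ)
      exact (h1.ofReal_comp).mul_const _
    have heq : mAlpha α =ᶠ[nhds τ] fun t => ((t ^ α : ℝ) : ℂ) * cc α 1 := by
      filter_upwards [IsOpen.mem_nhds isOpen_Ioi (show τ ∈ Set.Ioi (0:ℝ) from h)] with t ht
      rw [mAlpha_eq, Real.sign_of_pos ht, abs_of_pos ht]
    rw [hs, abs_of_pos h]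
    simpa using key.congr_of_eventuallyEq heq

lemma contDiffAt_mAlpha (α τ : ℝ) (hτ : τ ≠ 0) :
    ContDiffAt ℝ 1 (mAlpha α) τ := by
  rcases lt_or_gt_of_ne hτ with h | h
  · have key : ContDiffAt ℝ 1 (fun t : ℝ => (((-t) ^ α : ℝ) : ℂ) * cc α (-1)) τ := by
      have h1 : ContDiffAt ℝ 1 (fun t : ℝ => (-t) ^ α) τ := by
        have h2 : ContDiffAt ℝ 1 (fun x : ℝ => x ^ α) (-τ) :=
          Real.contDiffAt_rpow_const_of_ne (by linarith)
        exact h2.comp τ (contDiffAt_id.neg)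
      exact (Complex.ofRealCLM.contDiff.contDiffAt.comp τ h1).mul contDiffAt_const
    apply key.congr_of_eventuallyEq
    filter_upwards [IsOpen.mem_nhds isOpen_Iio (show τ ∈ Set.Iio (0:ℝ) from h)] with t ht
    rw [mAlpha_eq, Real.sign_of_neg ht, abs_of_neg ht]
  · have key : ContDiffAt ℝ 1 (fun t : ℝ => ((t ^ α : ℝ) : ℂ) * cc α 1) τ := by
      have h1 : ContDiffAt ℝ 1 (fun t : ℝ => t ^ α) τ :=
        Real.contDiffAt_rpow_const_of_ne hτ
      exact (Complex.ofRealCLM.contDiff.contDiffAt.comp τ h1).mul contDiffAt_const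
    apply key.congr_of_eventuallyEq
    filter_upwards [IsOpen.mem_nhds isOpen_Ioi (show τ ∈ Set.Ioi (0:ℝ) from h)] with t ht
    rw [mAlpha_eq, Real.sign_of_pos ht, abs_of_pos ht]

lemma hasDerivAt_lAlpha (a b α τ : ℝ) (ha : 0 ≤ a) (hα0 : 0 < α) (hα1 : α < 1) (hτ : τ ≠ 0) :
    HasDerivAt (lAlpha a b α)
      ((((b : ℂ) - a) * (((Real.sign τ * (α * |τ| ^ (α - 1)) : ℝ) : ℂ) * cc α (Real.sign τ))) /
        (1 + (a : ℂ) * mAlpha α τ) ^ 2) τ := by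
  have hm := hasDerivAt_mAlpha α τ hτ
  set mD := ((Real.sign τ * (α * |τ| ^ (α - 1)) : ℝ) : ℂ) * cc α (Real.sign τ)
  have hnum : HasDerivAt (fun t => 1 + (b : ℂ) * mAlpha α t) ((b : ℂ) * mD) τ :=
    (hm.const_mul (b : ℂ)).const_add 1
  have hden : HasDerivAt (fun t => 1 + (a : ℂ) * mAlpha α t) ((a : ℂ) * mD) τ :=
    (hm.const_mul (a : ℂ)).const_add 1
  have hd := hnum.div hden (denom_ne a α τ ha hα0 hα1)
  convert hd using 1
  · rfl
  · congr 1
  · congr 1; ring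

lemma norm_sq_norm (z : ℂ) : ‖z ^ 2‖ = Complex.normSq z := by
  rw [norm_pow, Complex.sq_norm]

end Stmt1Aux

theorem stmt1 (a b α : ℝ) (ha : 0 < a) (hab : a < b) (hα0 : 0 < α) (hα1 : α < 1) :
    ContDiffOn ℝ 1 (lAlpha a b α) ({0}ᶜ : Set ℝ) ∧
    ∃ C : ℝ, 0 < C ∧ ∀ τ : ℝ, τ ≠ 0 → ‖deriv (lAlpha a b α) τ‖ ≤ C / |τ| := by
  open Stmt1Aux in
  constructor
  · intro τ hτ
    have hτ' : τ ≠ 0 := hτ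
    have hc : ContDiffAt ℝ 1 (lAlpha a b α) τ := by
      have hm := contDiffAt_mAlpha α τ hτ'
      have hg : ContDiffAt ℂ 1 (fun z : ℂ => (1 + (b : ℂ) * z) / (1 + (a : ℂ) * z))
          (mAlpha α τ) := by
        apply ContDiffAt.div
        · exact contDiffAt_const.add (contDiffAt_const.mul contDiffAt_id)
        · exact contDiffAt_const.add (contDiffAt_const.mul contDiffAt_id)
        · exact denom_ne a α τ ha.le hα0 hα1
      have : lAlpha a b α = (fun z : ℂ => (1 + (b : ℂ) * z) / (1 + (a : ℂ) * z)) ∘ mAlpha α :=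
        rfl
      rw [this]
      exact (hg.restrict_scalars ℝ).comp τ hm
    exact hc.contDiffWithinAt
  · set cθ := Real.cos (α * Real.pi / 2) with hcθ
    have hcos : 0 < cθ := cos_pos α hα0 hα1
    refine ⟨(b - a) * α / (a * cθ),
      div_pos (mul_pos (by linarith) hα0) (mul_pos ha hcos), fun τ hτ => ?_⟩
    have hD := hasDerivAt_lAlpha a b α τ ha.le hα0 hα1 hτ
    rw [hD.deriv]
    have habs : 0 < |τ| := abs_pos.mpr hτ
    have hsgn : |Real.sign τ| = 1 := by
      rcases lt_or_gt_of_ne hτ with h | h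
      · rw [Real.sign_of_neg h]; norm_num
      · rw [Real.sign_of_pos h]; norm_num
    have hss : Real.sign τ = 1 ∨ Real.sign τ = -1 := by
      rcases lt_or_gt_of_ne hτ with h | h
      · exact Or.inr (Real.sign_of_neg h)
      · exact Or.inl (Real.sign_of_pos h)
    -- norm of numerator
    have hnum : ‖((b : ℂ) - a) * (((Real.sign τ * (α * |τ| ^ (α - 1)) : ℝ) : ℂ) *
        cc α (Real.sign τ))‖ = (b - a) * (α * |τ| ^ (α - 1)) := by
      rw [norm_mul, norm_mul]
      rw [abs_cc α _ hss]
      have h1 : ‖((b : ℂ) - a)‖ = b - a := by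
        rw [show ((b : ℂ) - a) = ((b - a : ℝ) : ℂ) by push_cast; ring, Complex.norm_real,
          Real.norm_eq_abs, abs_of_pos (by linarith : (0:ℝ) < b - a)]
      have h2 : ‖(((Real.sign τ * (α * |τ| ^ (α - 1)) : ℝ)) : ℂ)‖ = α * |τ| ^ (α - 1) := by
        rw [Complex.norm_real, Real.norm_eq_abs, abs_mul, hsgn, one_mul,
          _root_.abs_of_nonneg (mul_nonneg hα0.le (Real.rpow_nonneg (abs_nonneg τ) _))]
      rw [h1, h2, mul_one]
    have hNpos : 0 < Complex.normSq (1 + (a : ℂ) * mAlpha α τ) := by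
      rw [Complex.normSq_pos]
      exact denom_ne a α τ ha.le hα0 hα1
    rw [norm_div, hnum, norm_sq_norm]
    have hNge : a * cθ * |τ| ^ α ≤ Complex.normSq (1 + (a : ℂ) * mAlpha α τ) :=
      normSq_denom_ge a α τ ha.le
    have hrp : (0:ℝ) < |τ| ^ α := Real.rpow_pos_of_pos habs α
    have key : (b - a) * (α * |τ| ^ (α - 1)) / (a * cθ * |τ| ^ α) =
        (b - a) * α / (a * cθ) / |τ| := by
      rw [Real.rpow_sub habs, Real.rpow_one]
      field_simp
    calc (b - a) * (α * |τ| ^ (α - 1)) / Complex.normSq (1 + (a : ℂ) * mAlpha α τ)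
        ≤ (b - a) * (α * |τ| ^ (α - 1)) / (a * cθ * |τ| ^ α) := by
          apply div_le_div_of_nonneg_left
            (mul_nonneg (by linarith) (mul_nonneg hα0.le (Real.rpow_nonneg (abs_nonneg τ) _)))
            (mul_pos (mul_pos ha hcos) hrp) hNge
      _ = (b - a) * α / (a * cθ) / |τ| := key
end

section
/- For 0 < a < b and α ∈ (0,1), l_α(τ) tends to b/a as τ → +∞ and also as τ → −∞. -/
open Real Complex Filter

lemma norm_mAlpha (α : ℝ) {τ : ℝ} (hτ : τ ≠ 0) : ‖mAlpha α τ‖ = |τ| ^ α := by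
  have hs : (Real.sign τ)^2 = 1 := by
    rcases hτ.lt_or_gt with h | h
    · rw [Real.sign_of_neg h]; ring
    · rw [Real.sign_of_pos h]; ring
  have h1 : ‖(((Real.cos (α * Real.pi / 2) : ℝ) : ℂ) +
      Complex.I * ((Real.sign τ : ℝ) : ℂ) * ((Real.sin (α * Real.pi / 2) : ℝ) : ℂ))‖ = 1 := by
    rw [show (1:ℝ) = Real.sqrt 1 from (Real.sqrt_one).symm]
    rw [Complex.norm_def, Complex.normSq_apply]
    congr 1
    simp only [Complex.add_re, Complex.add_im, Complex.mul_re, Complex.mul_im,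
      Complex.I_re, Complex.I_im, Complex.ofReal_re, Complex.ofReal_im, Complex.normSq_apply]
    nlinarith [Real.sin_sq_add_cos_sq (α * Real.pi / 2), hs]
  rw [mAlpha, norm_mul, h1, mul_one, Complex.norm_real, Real.norm_eq_abs,
    _root_.abs_of_nonneg (Real.rpow_nonneg (abs_nonneg τ) α)]

lemma mAlpha_ne_zero (α : ℝ) {τ : ℝ} (hτ : τ ≠ 0) : mAlpha α τ ≠ 0 := by
  intro h
  have := norm_mAlpha α hτ
  rw [h, norm_zero] at this
  exact (Real.rpow_pos_of_pos (abs_pos.mpr hτ) α).ne' this.symm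

lemma tendsto_lAlpha (a b α : ℝ) (ha : 0 < a) (l : Filter ℝ)
    (h0 : ∀ᶠ τ in l, τ ≠ 0)
    (hnorm : Tendsto (fun τ => |τ| ^ α) l atTop) :
    Tendsto (lAlpha a b α) l (nhds ((b / a : ℝ) : ℂ)) := by
  have hminv : Tendsto (fun τ => (mAlpha α τ)⁻¹) l (nhds 0) := by
    rw [tendsto_zero_iff_norm_tendsto_zero]
    have : Tendsto (fun τ => (|τ| ^ α)⁻¹) l (nhds 0) := hnorm.inv_tendsto_atTop
    refine this.congr' ?_
    filter_upwards [h0] with τ hτ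
    rw [norm_inv, norm_mAlpha α hτ]
  have ha' : ((0 : ℂ) + (a : ℂ)) ≠ 0 := by
    simpa using Complex.ofReal_ne_zero.mpr ha.ne'
  have key : Tendsto (fun τ => ((mAlpha α τ)⁻¹ + b) / ((mAlpha α τ)⁻¹ + a)) l
      (nhds (((0 : ℂ) + b) / ((0 : ℂ) + a))) :=
    Tendsto.div (hminv.add tendsto_const_nhds) (hminv.add tendsto_const_nhds) ha'
  have heq : ((0 : ℂ) + b) / ((0 : ℂ) + a) = ((b / a : ℝ) : ℂ) := by
    push_cast; ring
  rw [heq] at key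
  refine key.congr' ?_
  filter_upwards [h0] with τ hτ
  have hm : mAlpha α τ ≠ 0 := mAlpha_ne_zero α hτ
  set m := mAlpha α τ
  have : (m⁻¹ + b) / (m⁻¹ + a) = (m⁻¹ * (1 + b * m)) / (m⁻¹ * (1 + a * m)) := by
    congr 1 <;> field_simp <;> ring
  rw [this, mul_div_mul_left _ _ (inv_ne_zero hm)]
  rfl

theorem stmt2 (a b α : ℝ) (ha : 0 < a) (hab : a < b) (hα0 : 0 < α) (hα1 : α < 1) :
    Tendsto (lAlpha a b α) atTop (nhds ((b / a : ℝ) : ℂ)) ∧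
    Tendsto (lAlpha a b α) atBot (nhds ((b / a : ℝ) : ℂ)) := by
  constructor
  · exact tendsto_lAlpha a b α ha atTop (eventually_ne_atTop 0)
      ((tendsto_rpow_atTop hα0).comp tendsto_abs_atTop_atTop)
  · exact tendsto_lAlpha a b α ha atBot (eventually_ne_atBot 0)
      ((tendsto_rpow_atTop hα0).comp tendsto_abs_atBot_atTop)
end

section
/- Let 0 < a < b, α ∈ (0,1), and z(ξ,τ) = −τ² + l_α(τ)·ξ² where l_α(τ) = (1 + b·m_α(τ))/(1 + a·m_α(τ)) and m_α(τ) = |τ|^α(cos(απ/2) + i·sgn(τ)·sin(απ/2)). If ξ₀ ≠ 0 and τ₀ ∈ ℝ satisfies τ₀² = (b/a)·ξ₀², then |z(λξ₀, λτ₀)|/λ² → 0 as λ → +∞. In particular, there exist no constants c > 0 and R > 0 such that |z(ξ,τ)| ≥ c(ξ² + τ²) for all points (ξ,τ) = λ(ξ₀,τ₀) with λ(ξ₀² + τ₀²)^{1/2} ≥ R. -/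
open Real Complex Filter

/-- The Fourier symbol `z(ξ,τ) = −τ² + l_α(τ)·ξ²` of the time-fractional Zener
wave operator. -/
noncomputable def zZener (a b α ξ τ : ℝ) : ℂ :=
  -(τ : ℂ) ^ 2 + lAlpha a b α τ * (ξ : ℂ) ^ 2

theorem stmt12 (a b α : ℝ) (ha : 0 < a) (hab : a < b) (hα0 : 0 < α) (hα1 : α < 1)
    (ξ₀ τ₀ : ℝ) (hξ₀ : ξ₀ ≠ 0) (hchar : τ₀ ^ 2 = (b / a) * ξ₀ ^ 2) :
    Tendsto (fun lam : ℝ => ‖zZener a b α (lam * ξ₀) (lam * τ₀)‖ / lam ^ 2)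
      atTop (nhds 0) ∧
    ¬ ∃ c : ℝ, 0 < c ∧ ∃ R : ℝ, 0 < R ∧ ∀ lam : ℝ, 0 < lam →
        R ≤ lam * Real.sqrt (ξ₀ ^ 2 + τ₀ ^ 2) →
        c * ((lam * ξ₀) ^ 2 + (lam * τ₀) ^ 2) ≤ ‖zZener a b α (lam * ξ₀) (lam * τ₀)‖ := by
  have hb : 0 < b := ha.trans hab
  have hτ₀ : τ₀ ≠ 0 := by
    intro h
    have h2 : (0:ℝ) < (b/a) * ξ₀^2 := by positivity
    rw [h] at hchar
    simp at hchar
    rcases hchar with (h' | h') | h'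
    exacts [hb.ne' h', ha.ne' h', hξ₀ h']
  -- cos positivity
  have hcos : 0 < Real.cos (α * Real.pi / 2) := by
    apply Real.cos_pos_of_mem_Ioo
    constructor <;> nlinarith [Real.pi_pos]
  have hm₀ : mAlpha α τ₀ ≠ 0 := by
    unfold mAlpha
    apply mul_ne_zero
    · exact_mod_cast (Real.rpow_pos_of_pos (abs_pos.mpr hτ₀) α).ne'
    · intro h
      have h' := congrArg Complex.re h
      simp only [Complex.add_re, Complex.mul_re, Complex.mul_im, Complex.I_re, Complex.I_im,
        Complex.ofReal_re, Complex.ofReal_im, Complex.zero_re] at h'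
      nlinarith [h']
  -- scaling of mAlpha
  have hscale : ∀ lam : ℝ, 0 < lam →
      mAlpha α (lam * τ₀) = ((lam ^ α : ℝ) : ℂ) * mAlpha α τ₀ := by
    intro lam hlam
    unfold mAlpha
    have h1 : |lam * τ₀| ^ α = lam ^ α * |τ₀| ^ α := by
      rw [abs_mul, abs_of_pos hlam, Real.mul_rpow hlam.le (abs_nonneg _)]
    have h2 : Real.sign (lam * τ₀) = Real.sign τ₀ := by
      rcases hτ₀.lt_or_gt with h | h
      · rw [Real.sign_of_neg h, Real.sign_of_neg (mul_neg_of_pos_of_neg hlam h)]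
      · rw [Real.sign_of_pos h, Real.sign_of_pos (mul_pos hlam h)]
    rw [h1, h2]
    push_cast
    ring
  -- limit of lAlpha
  have hg : Tendsto (fun lam : ℝ => (((lam ^ α : ℝ) : ℂ) * mAlpha α τ₀)⁻¹)
      atTop (nhds 0) := by
    have h1 : Tendsto (fun lam : ℝ => (lam ^ α)⁻¹) atTop (nhds 0) :=
      (_root_.tendsto_rpow_atTop hα0).inv_tendsto_atTop
    have h2 : Tendsto (fun lam : ℝ => (((lam ^ α : ℝ) : ℂ))⁻¹) atTop (nhds 0) := by
      have h3 := (Complex.continuous_ofReal.tendsto 0).comp h1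
      simp only [Complex.ofReal_zero] at h3
      exact h3.congr fun x => by simp [Function.comp, Complex.ofReal_inv]
    have := h2.mul_const (mAlpha α τ₀)⁻¹
    simp only [zero_mul] at this
    refine this.congr fun lam => ?_
    rw [mul_inv]
  have hl : Tendsto (fun lam : ℝ => lAlpha a b α (lam * τ₀)) atTop
      (nhds ((b : ℂ) / (a : ℂ))) := by
    have hlim : Tendsto (fun lam : ℝ =>
        ((((lam ^ α : ℝ) : ℂ) * mAlpha α τ₀)⁻¹ + b) /
        ((((lam ^ α : ℝ) : ℂ) * mAlpha α τ₀)⁻¹ + a)) atTop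
        (nhds ((b : ℂ) / (a : ℂ))) := by
      have hden : ((0 : ℂ) + a) ≠ 0 := by
        simpa using (Complex.ofReal_ne_zero.mpr ha.ne')
      have := ((hg.add_const (b : ℂ)).div (hg.add_const (a : ℂ)) hden)
      simp only [zero_add] at this
      exact this
    apply hlim.congr'
    filter_upwards [eventually_gt_atTop 0] with lam hlam
    have hgne : (((lam ^ α : ℝ) : ℂ) * mAlpha α τ₀) ≠ 0 := by
      apply mul_ne_zero _ hm₀
      exact_mod_cast (Real.rpow_pos_of_pos hlam α).ne'
    have hx : ((lam ^ α : ℝ) : ℂ) ≠ 0 := left_ne_zero_of_mul hgne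
    rw [lAlpha, hscale lam hlam]
    field_simp
  have hzero : -(τ₀ : ℂ) ^ 2 + ((b : ℂ) / (a : ℂ)) * (ξ₀ : ℂ) ^ 2 = 0 := by
    have h' : ((τ₀ ^ 2 : ℝ) : ℂ) = (((b / a) * ξ₀ ^ 2 : ℝ) : ℂ) := by rw [hchar]
    push_cast at h'
    rw [h']; ring
  -- Part 1
  have hmain : Tendsto (fun lam : ℝ => ‖zZener a b α (lam * ξ₀) (lam * τ₀)‖ / lam ^ 2)
      atTop (nhds 0) := by
    have hcont : Tendsto (fun lam : ℝ =>
        ‖-(τ₀ : ℂ) ^ 2 + lAlpha a b α (lam * τ₀) * (ξ₀ : ℂ) ^ 2‖) atTop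
        (nhds ‖-(τ₀ : ℂ) ^ 2 + ((b : ℂ) / (a : ℂ)) * (ξ₀ : ℂ) ^ 2‖) :=
      ((hl.mul_const ((ξ₀ : ℂ) ^ 2)).const_add (-(τ₀ : ℂ) ^ 2)).norm
    rw [hzero, norm_zero] at hcont
    apply hcont.congr'
    filter_upwards [eventually_gt_atTop 0] with lam hlam
    have hz : zZener a b α (lam * ξ₀) (lam * τ₀) =
        (lam : ℂ) ^ 2 * (-(τ₀ : ℂ) ^ 2 + lAlpha a b α (lam * τ₀) * (ξ₀ : ℂ) ^ 2) := by
      rw [zZener]; push_cast; ring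
    rw [hz, norm_mul]
    have : ‖(lam : ℂ) ^ 2‖ = lam ^ 2 := by
      rw [norm_pow, Complex.norm_real, Real.norm_of_nonneg hlam.le]
    rw [this, mul_div_cancel_left₀ _ (show (lam ^ 2 : ℝ) ≠ 0 by positivity)]
  refine ⟨hmain, ?_⟩
  rintro ⟨c, hc, R, hR, hbound⟩
  have hs : (0:ℝ) < ξ₀ ^ 2 + τ₀ ^ 2 := by positivity
  have hev : ∀ᶠ lam : ℝ in atTop,
      ‖zZener a b α (lam * ξ₀) (lam * τ₀)‖ / lam ^ 2 < c * (ξ₀ ^ 2 + τ₀ ^ 2) := by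
    have hpos : (0:ℝ) < c * (ξ₀ ^ 2 + τ₀ ^ 2) := by positivity
    exact hmain.eventually_lt_const hpos
  obtain ⟨N, hN⟩ := hev.exists_forall_of_atTop
  have hsq : (0:ℝ) < Real.sqrt (ξ₀ ^ 2 + τ₀ ^ 2) := Real.sqrt_pos.mpr hs
  set lam := max N (max 1 (R / Real.sqrt (ξ₀ ^ 2 + τ₀ ^ 2))) with hlamdef
  have hlam1 : (1:ℝ) ≤ lam := le_max_of_le_right (le_max_left _ _)
  have hlampos : 0 < lam := lt_of_lt_of_le one_pos hlam1
  have hR' : R ≤ lam * Real.sqrt (ξ₀ ^ 2 + τ₀ ^ 2) := by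
    have h1 : R / Real.sqrt (ξ₀ ^ 2 + τ₀ ^ 2) ≤ lam :=
      le_max_of_le_right (le_max_right _ _)
    calc R = R / Real.sqrt (ξ₀ ^ 2 + τ₀ ^ 2) * Real.sqrt (ξ₀ ^ 2 + τ₀ ^ 2) := by
            field_simp
      _ ≤ lam * Real.sqrt (ξ₀ ^ 2 + τ₀ ^ 2) := by
            exact mul_le_mul_of_nonneg_right h1 hsq.le
  have hle := hbound lam hlampos hR'
  have hlt := hN lam (le_max_left _ _)
  have hlam2 : (0:ℝ) < lam ^ 2 := by positivity
  have : c * (ξ₀ ^ 2 + τ₀ ^ 2) ≤ ‖zZener a b α (lam * ξ₀) (lam * τ₀)‖ / lam ^ 2 := by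
    rw [le_div_iff₀ hlam2]
    nlinarith [hle]
  linarith
end
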